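/- Fix indices i, j with 1 ≤ i, j ≤ q. Assume W, A, S have nonnegative entries and a^t := A_{ij} > 0. Let F(a) = D(W, A', S) where A' agrees with A except that its (i,j) entry is replaced by a, and define G(a, a^t) = F(a^t) + F'(a^t)·(a − a^t) + ((Wᵀ·W·A·S·Sᵀ)_{ij} / a^t)·(a − a^t)², where F' denotes the derivative of F. Then G is an auxiliary function for F: G(a^t, a^t) = F(a^t) and G(a, a^t) ≥ F(a) for all a ∈ ℝ. -/

import Mathlib

open Matrix

/-- The GBR-NMF objective `D(W,A,S) = ‖X − W·A·S‖_F² = Tr((X − WAS)(X − WAS)ᵀ)`. -/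
noncomputable def objD {n p q : ℕ} (X : Matrix (Fin n) (Fin p) ℝ)
    (W : Matrix (Fin n) (Fin q) ℝ) (A : Matrix (Fin q) (Fin q) ℝ)
    (S : Matrix (Fin q) (Fin p) ℝ) : ℝ :=
  Matrix.trace ((X - W * A * S) * (X - W * A * S)ᵀ)

/-- The matrix agreeing with `M` except that its `(i,j)` entry is replaced by `w`. -/
def updEntry {m k : ℕ} (M : Matrix (Fin m) (Fin k) ℝ) (i : Fin m) (j : Fin k) (w : ℝ) :
    Matrix (Fin m) (Fin k) ℝ :=
  fun a b => if a = i ∧ b = j then w else M a b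

/-!
`F` is a quadratic polynomial in the entry `a`, so it equals its own second-order Taylor
expansion at `aᵗ`, with curvature `‖W eᵢ‖² ‖Sᵀ eⱼ‖² = (WᵀW)ᵢᵢ (SSᵀ)ⱼⱼ`. Hence `G` majorizes `F`
as soon as this curvature is at most `(WᵀW A SSᵀ)ᵢⱼ / aᵗ`, and indeed
`(WᵀW)ᵢᵢ aᵗ (SSᵀ)ⱼⱼ` is one of the nonnegative terms of the sum `(WᵀW · A · SSᵀ)ᵢⱼ`.
-/

namespace Matrix

variable {l m n α : Type*} [Fintype m]

section Nonneg

variable [Semiring α] [PartialOrder α] [IsOrderedRing α]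

lemma mul_apply_nonneg {M : Matrix l m α} {N : Matrix m n α} (hM : ∀ i k, 0 ≤ M i k)
    (hN : ∀ k j, 0 ≤ N k j) (i : l) (j : n) : 0 ≤ (M * N) i j :=
  Finset.sum_nonneg fun k _ => mul_nonneg (hM i k) (hN k j)

lemma mul_apply_le_mul_apply {M : Matrix l m α} {N : Matrix m n α} (hM : ∀ i k, 0 ≤ M i k)
    (hN : ∀ k j, 0 ≤ N k j) (i : l) (k : m) (j : n) : M i k * N k j ≤ (M * N) i j :=
  Finset.single_le_sum (f := fun k => M i k * N k j)
    (fun k _ => mul_nonneg (hM i k) (hN k j)) (Finset.mem_univ k)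

lemma mul_apply_mul_le_mul_mul_apply {o : Type*} [Fintype n]
    {P : Matrix l m α} {A : Matrix m n α} {Q : Matrix n o α} (hP : ∀ i k, 0 ≤ P i k)
    (hA : ∀ k k', 0 ≤ A k k') (hQ : ∀ k j, 0 ≤ Q k j) (i : l) (k : m) (k' : n) (j : o) :
    P i k * A k k' * Q k' j ≤ (P * A * Q) i j :=
  calc P i k * A k k' * Q k' j ≤ (P * A) i k' * Q k' j :=
        mul_le_mul_of_nonneg_right (mul_apply_le_mul_apply hP hA i k k') (hQ k' j)
    _ ≤ (P * A * Q) i j := mul_apply_le_mul_apply (mul_apply_nonneg hP hA) hQ i k' j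

end Nonneg

lemma trace_sub_smul_mul_transpose_sub_smul [Fintype n] [CommRing α]
    (R M : Matrix m n α) (t : α) :
    trace ((R - t • M) * (R - t • M)ᵀ)
      = trace (R * Rᵀ) - 2 * trace (R * Mᵀ) * t + trace (M * Mᵀ) * t ^ 2 := by
  have hcross : trace (M * Rᵀ) = trace (R * Mᵀ) := by
    rw [← trace_transpose, transpose_mul, transpose_transpose]
  simp only [transpose_sub, transpose_smul, Matrix.sub_mul, Matrix.mul_sub, Matrix.smul_mul,
    Matrix.mul_smul, trace_sub, trace_smul, smul_eq_mul, hcross]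
  ring

lemma trace_mul_single_mul_mul_transpose {o : Type*} [Fintype l] [Fintype n] [Fintype o]
    [DecidableEq m] [DecidableEq n] [CommRing α] (W : Matrix l m α) (S : Matrix n o α)
    (i : m) (j : n) :
    trace (W * single i j (1 : α) * S * (W * single i j (1 : α) * S)ᵀ)
      = (Wᵀ * W) i i * (S * Sᵀ) j j := by
  have hcycle : trace (W * single i j (1 : α) * S * (W * single i j (1 : α) * S)ᵀ)
      = trace (single i j (1 : α) * (S * Sᵀ) * single j i (1 : α) * (Wᵀ * W)) := by
    simp only [transpose_mul, transpose_single, Matrix.mul_assoc]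
    rw [trace_mul_comm]
    simp only [Matrix.mul_assoc]
  rw [hcycle, single_mul_mul_single, trace_single_mul, one_mul, mul_one, smul_eq_mul, mul_comm]

end Matrix

lemma updEntry_eq_add_smul_single {m k : ℕ} (M : Matrix (Fin m) (Fin k) ℝ) (i : Fin m)
    (j : Fin k) (w : ℝ) : updEntry M i j w = M + (w - M i j) • single i j 1 := by
  ext x y
  rcases eq_or_ne x i with rfl | hx <;> rcases eq_or_ne y j with rfl | hy <;>
    simp [updEntry, *, Ne.symm]

lemma objD_updEntry {n p q : ℕ} (X : Matrix (Fin n) (Fin p) ℝ) (W : Matrix (Fin n) (Fin q) ℝ)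
    (A : Matrix (Fin q) (Fin q) ℝ) (S : Matrix (Fin q) (Fin p) ℝ) (i j : Fin q) (a : ℝ) :
    objD X W (updEntry A i j a) S
      = objD X W A S
        - 2 * trace ((X - W * A * S) * (W * single i j (1 : ℝ) * S)ᵀ) * (a - A i j)
        + (Wᵀ * W) i i * (S * Sᵀ) j j * (a - A i j) ^ 2 := by
  have hres : X - W * updEntry A i j a * S
      = X - W * A * S - (a - A i j) • (W * single i j (1 : ℝ) * S) := by
    rw [updEntry_eq_add_smul_single, Matrix.mul_add, Matrix.add_mul, Matrix.mul_smul,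
      Matrix.smul_mul]
    abel
  rw [objD, hres, trace_sub_smul_mul_transpose_sub_smul, trace_mul_single_mul_mul_transpose, objD]

lemma hasDerivAt_of_forall_eq_quadratic {f : ℝ → ℝ} {x₀ b c : ℝ}
    (hf : ∀ x, f x = f x₀ + b * (x - x₀) + c * (x - x₀) ^ 2) : HasDerivAt f b x₀ := by
  rw [funext hf]
  have hsub := (hasDerivAt_id' x₀).sub_const x₀
  simpa [Pi.add_def] using ((hsub.const_mul b).const_add (f x₀)).add ((hsub.pow 2).const_mul c)

lemma le_add_deriv_mul_add_mul_sq_of_forall_eq_quadratic {f : ℝ → ℝ} {x₀ b c d : ℝ}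
    (hf : ∀ x, f x = f x₀ + b * (x - x₀) + c * (x - x₀) ^ 2) (hcd : c ≤ d) (x : ℝ) :
    f x ≤ f x₀ + deriv f x₀ * (x - x₀) + d * (x - x₀) ^ 2 := by
  rw [(hasDerivAt_of_forall_eq_quadratic hf).deriv, hf x]
  gcongr

/-- (Lemma on `A`-updates.) With `aᵗ = A_{ij} > 0`, `F(a) = D(W, A', S)` (entry `(i,j)` of `A`
replaced by `a`), the function
`G(a, aᵗ) = F(aᵗ) + F'(aᵗ)(a − aᵗ) + ((Wᵀ·W·A·S·Sᵀ)_{ij}/aᵗ)(a − aᵗ)²`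
is an auxiliary function for `F`: `G(aᵗ, aᵗ) = F(aᵗ)` and `G(a, aᵗ) ≥ F(a)` for all `a`. -/
theorem aux_function_for_A_update
    (n p q : ℕ)
    (X : Matrix (Fin n) (Fin p) ℝ) (W : Matrix (Fin n) (Fin q) ℝ)
    (A : Matrix (Fin q) (Fin q) ℝ) (S : Matrix (Fin q) (Fin p) ℝ)
    (hW : ∀ i j, 0 ≤ W i j) (hA : ∀ i j, 0 ≤ A i j) (hS : ∀ i j, 0 ≤ S i j)
    (i j : Fin q) (hpos : 0 < A i j) :
    let F : ℝ → ℝ := fun a => objD X W (updEntry A i j a) S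
    let G : ℝ → ℝ := fun a =>
      F (A i j) + deriv F (A i j) * (a - A i j)
        + ((Wᵀ * W * A * S * Sᵀ) i j / A i j) * (a - A i j) ^ 2
    G (A i j) = F (A i j) ∧ ∀ a : ℝ, G a ≥ F a := by
  intro F G
  have hF : ∀ a, F a = F (A i j)
      + -2 * trace ((X - W * A * S) * (W * single i j (1 : ℝ) * S)ᵀ) * (a - A i j)
      + (Wᵀ * W) i i * (S * Sᵀ) j j * (a - A i j) ^ 2 := by
    intro a
    simp only [F, objD_updEntry]
    ring
  have hcurv : (Wᵀ * W) i i * (S * Sᵀ) j j ≤ (Wᵀ * W * A * S * Sᵀ) i j / A i j := by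
    have hWW : ∀ k l, 0 ≤ (Wᵀ * W) k l := mul_apply_nonneg (fun k x => hW x k) hW
    have hSS : ∀ k l, 0 ≤ (S * Sᵀ) k l := mul_apply_nonneg hS (fun y l => hS l y)
    rw [le_div_iff₀ hpos, Matrix.mul_assoc (Wᵀ * W * A), mul_right_comm]
    exact mul_apply_mul_le_mul_mul_apply hWW hA hSS i i j j
  exact ⟨by simp [G], le_add_deriv_mul_add_mul_sq_of_forall_eq_quadratic hF hcurv⟩
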